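/- There exists a constant C > 0 such that the following holds. Let t ≥ 2 be real and let r be an integer with 1 ≤ r ≤ √t / 2. For 1 ≤ ν ≤ r define x_ν = ν√t / √(r² + ν²), y_ν = r√t / √(r² + ν²), m_ν = ⌊ν x_ν⌋ / ν, and n_ν = √(t − m_ν²). Then for every integer ν with 1 ≤ ν ≤ r, | exp(2πi(r·y_ν + ν·x_ν)) − exp(2πi·r·n_ν) | ≤ C·r / (ν² √t). -/

import Mathlib

open Real Complex

/-- `x_ν = ν√t / √(r² + ν²)`. -/
noncomputable def critPt (t : ℝ) (r ν : ℕ) : ℝ :=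
  (ν : ℝ) * Real.sqrt t / Real.sqrt ((r : ℝ)^2 + (ν : ℝ)^2)

/-- `y_ν = r√t / √(r² + ν²)`. -/
noncomputable def critVal (t : ℝ) (r ν : ℕ) : ℝ :=
  (r : ℝ) * Real.sqrt t / Real.sqrt ((r : ℝ)^2 + (ν : ℝ)^2)

/-- `m_ν = ⌊ν x_ν⌋ / ν`, the largest rational with denominator `ν` that is at most `x_ν`. -/
noncomputable def ratPt (t : ℝ) (r ν : ℕ) : ℝ :=
  (⌊(ν : ℝ) * critPt t r ν⌋ : ℝ) / (ν : ℝ)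

/-- `n_ν = √(t − m_ν²)`. -/
noncomputable def ratVal (t : ℝ) (r ν : ℕ) : ℝ :=
  Real.sqrt (t - (ratPt t r ν)^2)

/-!
The point `(x, y) = (x_ν, y_ν)` lies on the circle `u² + v² = t` and satisfies `ν y = r x`, so it
maximises the phase `r v + ν u` on the circle; `(m, n) = (m_ν, n_ν)` is a nearby point of the same
circle. Since `ν m` is an integer, `exp(2πi r n) = exp(2πi (r n + ν m))`, and the difference of the
exponentials is at most `2π` times the drop `D` of the phase from `(x, y)` to `(m, n)`. This drop is
quadratic in `x - m`: exactly `D · y (y + n)² = r (x - m)² (t + x m + y n)`, whence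
`D ≤ r (x - m)² t / (2 y³)`. Finally `x - m ≤ 1 / ν` and `y ≥ √t / 2` (as `ν ≤ r`) give
`D ≤ 4 r / (ν² √t)`.
-/

lemma norm_exp_I_mul_ofReal_sub_exp_I_mul_ofReal_le (u v : ℝ) :
    ‖exp (I * u) - exp (I * v)‖ ≤ |u - v| := by
  have hfactor : exp (I * u) - exp (I * v) = exp (I * v) * (exp (I * ↑(u - v)) - 1) := by
    rw [mul_sub, ← Complex.exp_add]
    push_cast
    ring_nf
  rw [hfactor, norm_mul, Complex.norm_exp_I_mul_ofReal, one_mul]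
  exact Real.norm_exp_I_mul_ofReal_sub_one_le

lemma norm_exp_two_pi_I_mul_sub_le (u v : ℝ) (k : ℤ) :
    ‖exp (2 * π * I * u) - exp (2 * π * I * v)‖ ≤ 2 * π * |u - (v + k)| := by
  have hu : exp (2 * π * I * u) = exp (I * ↑(2 * π * u)) := by push_cast; ring_nf
  have hv : exp (2 * π * I * v) = exp (I * ↑(2 * π * (v + k))) := by
    push_cast
    rw [show I * (2 * π * (v + k)) = 2 * π * I * v + k * (2 * π * I) by ring, Complex.exp_add,
      Complex.exp_int_mul_two_pi_mul_I, mul_one]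
  rw [hu, hv]
  calc _ ≤ |2 * π * u - 2 * π * (v + k)| := norm_exp_I_mul_ofReal_sub_exp_I_mul_ofReal_le _ _
    _ = 2 * π * |u - (v + k)| := by rw [← mul_sub, abs_mul, abs_of_pos two_pi_pos]

section CirclePhase

variable {t r ν x y m n : ℝ}

lemma circle_phase_gap_mul_eq (hxy : x ^ 2 + y ^ 2 = t) (hmn : m ^ 2 + n ^ 2 = t)
    (htan : ν * y = r * x) :
    (r * y + ν * x - (r * n + ν * m)) * (y * (y + n) ^ 2) =
      r * (x - m) ^ 2 * (t + x * m + y * n) := by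
  linear_combination (x - m) * (y + n) ^ 2 * htan + r * (x * (x - m) - y * (y + n)) * hmn
    + r * (y * (y + n) - m * (x - m)) * hxy

lemma abs_circle_phase_gap_le (hr : 0 ≤ r) (hy : 0 < y) (hn : 0 ≤ n) (hmx : m ^ 2 ≤ x ^ 2)
    (hxy : x ^ 2 + y ^ 2 = t) (hmn : m ^ 2 + n ^ 2 = t) (htan : ν * y = r * x) :
    |r * y + ν * x - (r * n + ν * m)| ≤ r * (x - m) ^ 2 * t / (2 * y ^ 3) := by
  have ht : 0 ≤ t := hxy ▸ by positivity
  have hyn : y ≤ n := by nlinarith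
  have hden : 4 * y ^ 3 ≤ y * (y + n) ^ 2 := by nlinarith
  have hQ0 : 0 ≤ t + x * m + y * n := by nlinarith [sq_nonneg (x + m), sq_nonneg (y + n)]
  have hQ : t + x * m + y * n ≤ 2 * t := by nlinarith [sq_nonneg (x - m), sq_nonneg (y - n)]
  rw [eq_div_of_mul_eq (by positivity) (circle_phase_gap_mul_eq hxy hmn htan),
    abs_of_nonneg (by positivity)]
  calc r * (x - m) ^ 2 * (t + x * m + y * n) / (y * (y + n) ^ 2)
      ≤ r * (x - m) ^ 2 * (2 * t) / (4 * y ^ 3) := by gcongr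
    _ = r * (x - m) ^ 2 * t / (2 * y ^ 3) := by field_simp; ring

end CirclePhase

section CriticalPoint

variable {t : ℝ} {r ν : ℕ}

lemma critPt_nonneg : 0 ≤ critPt t r ν := by unfold critPt; positivity

lemma nat_mul_critVal : (ν : ℝ) * critVal t r ν = r * critPt t r ν := by
  unfold critVal critPt; ring

lemma critPt_sq_add_critVal_sq (ht : 0 ≤ t) (hr : 0 < r) :
    critPt t r ν ^ 2 + critVal t r ν ^ 2 = t := by
  have hs : (0 : ℝ) < (r : ℝ) ^ 2 + (ν : ℝ) ^ 2 := by positivity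
  unfold critPt critVal
  rw [div_pow, div_pow, mul_pow, mul_pow, sq_sqrt ht, sq_sqrt hs.le]
  field_simp
  ring

lemma sqrt_div_two_le_critVal (hr : 0 < r) (hνr : ν ≤ r) : √t / 2 ≤ critVal t r ν := by
  have hνr' : (ν : ℝ) ≤ r := by exact_mod_cast hνr
  have hs : √((r : ℝ) ^ 2 + (ν : ℝ) ^ 2) ≤ 2 * r :=
    sqrt_le_iff.mpr ⟨by positivity, by nlinarith [Nat.cast_nonneg (α := ℝ) ν]⟩
  unfold critVal
  rw [le_div_iff₀ (by positivity)]
  calc √t / 2 * √((r : ℝ) ^ 2 + (ν : ℝ) ^ 2) ≤ √t / 2 * (2 * r) := by gcongr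
    _ = r * √t := by ring

lemma ratPt_nonneg : 0 ≤ ratPt t r ν := by
  unfold ratPt
  have : (0 : ℝ) ≤ ⌊(ν : ℝ) * critPt t r ν⌋ := by
    exact_mod_cast Int.floor_nonneg.mpr (mul_nonneg ν.cast_nonneg critPt_nonneg)
  positivity

lemma nat_mul_ratPt (hν : 0 < ν) : (ν : ℝ) * ratPt t r ν = ⌊(ν : ℝ) * critPt t r ν⌋ := by
  unfold ratPt
  field_simp

lemma ratPt_le_critPt (hν : 0 < ν) : ratPt t r ν ≤ critPt t r ν := by
  have hν' : (0 : ℝ) < ν := by exact_mod_cast hν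
  rw [← mul_le_mul_iff_of_pos_left hν', nat_mul_ratPt hν]
  exact Int.floor_le _

lemma critPt_sub_ratPt_le (hν : 0 < ν) : critPt t r ν - ratPt t r ν ≤ 1 / ν := by
  have hν' : (0 : ℝ) < ν := by exact_mod_cast hν
  rw [← mul_le_mul_iff_of_pos_left hν', mul_sub, nat_mul_ratPt hν, mul_one_div_cancel hν'.ne']
  linarith [Int.lt_floor_add_one ((ν : ℝ) * critPt t r ν)]

lemma ratPt_sq_le_critPt_sq (hν : 0 < ν) : ratPt t r ν ^ 2 ≤ critPt t r ν ^ 2 :=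
  pow_le_pow_left₀ ratPt_nonneg (ratPt_le_critPt hν) 2

lemma ratPt_sq_add_ratVal_sq (ht : 0 ≤ t) (hr : 0 < r) (hν : 0 < ν) :
    ratPt t r ν ^ 2 + ratVal t r ν ^ 2 = t := by
  have := critPt_sq_add_critVal_sq (ν := ν) ht hr
  unfold ratVal
  rw [sq_sqrt (by nlinarith [ratPt_sq_le_critPt_sq (t := t) (r := r) hν])]
  ring

lemma abs_ratPt_phase_gap_le (ht : 0 < t) (hν : 0 < ν) (hνr : ν ≤ r) :
    |r * critVal t r ν + ν * critPt t r ν - (r * ratVal t r ν + ν * ratPt t r ν)| ≤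
      4 * r / (ν ^ 2 * √t) := by
  have hr : 0 < r := hν.trans_le hνr
  have hy := sqrt_div_two_le_critVal (t := t) hr hνr
  have hd : 0 ≤ critPt t r ν - ratPt t r ν := sub_nonneg.mpr (ratPt_le_critPt hν)
  have hsqrt : 0 < √t := sqrt_pos.mpr ht
  calc _ ≤ r * (critPt t r ν - ratPt t r ν) ^ 2 * t / (2 * critVal t r ν ^ 3) :=
        abs_circle_phase_gap_le r.cast_nonneg (by linarith) (sqrt_nonneg _)
          (ratPt_sq_le_critPt_sq hν) (critPt_sq_add_critVal_sq ht.le hr)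
          (ratPt_sq_add_ratVal_sq ht.le hr hν) nat_mul_critVal
    _ ≤ r * (1 / ν) ^ 2 * t / (2 * (√t / 2) ^ 3) := by
        gcongr
        exact critPt_sub_ratPt_le hν
    _ = 4 * r / (ν ^ 2 * √t) := by
        field_simp
        rw [sq_sqrt ht.le]
        norm_num

end CriticalPoint

theorem exp_phase_approx :
    ∃ C : ℝ, 0 < C ∧ ∀ t : ℝ, 2 ≤ t → ∀ r : ℕ, 1 ≤ r → (r : ℝ) ≤ Real.sqrt t / 2 →
      ∀ ν : ℕ, 1 ≤ ν → ν ≤ r →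
        Norm.norm
            (Complex.exp (2 * (Real.pi : ℂ) * Complex.I *
                (((r : ℝ) * critVal t r ν + (ν : ℝ) * critPt t r ν : ℝ) : ℂ)) -
              Complex.exp (2 * (Real.pi : ℂ) * Complex.I * (((r : ℝ) * ratVal t r ν : ℝ) : ℂ)))
          ≤ C * (r : ℝ) / ((ν : ℝ)^2 * Real.sqrt t) := by
  refine ⟨8 * π, by positivity, fun t ht r _ _ ν hν hνr => ?_⟩
  calc _ ≤ 2 * π * |r * critVal t r ν + ν * critPt t r ν
            - (r * ratVal t r ν + ν * ratPt t r ν)| := by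
        rw [nat_mul_ratPt hν]
        exact norm_exp_two_pi_I_mul_sub_le _ _ _
    _ ≤ 2 * π * (4 * r / (ν ^ 2 * √t)) := by
        gcongr
        exact abs_ratPt_phase_gap_le (by linarith) hν hνr
    _ = 8 * π * r / (ν ^ 2 * √t) := by ring
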